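/- arXiv:2407.08934 — 5 statements merged into one kernel-verified Lean document; each statement's English description precedes it below -/
import Mathlib

section
/- The vector space of all maps w : Z → V is the internal direct sum of the pure interaction spaces E_I over all subsets I ⊆ {1,…,k}; equivalently, every w : Z → V has a unique decomposition w = ∑_{I ⊆ {1,…,k}} w_I with w_I ∈ E_I. -/
open Finset

/-- Averaging operator π_J. -/
noncomputable def piAvg {ι : Type*} [Fintype ι] [DecidableEq ι] {Z : ι → Type*} [∀ i, Fintype (Z i)]
    [∀ i, DecidableEq (Z i)] {V : Type*} [AddCommGroup V] [Module ℝ V]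
    (J : Finset ι) (w : (∀ i, Z i) → V) : (∀ i, Z i) → V :=
  fun z => (∏ i ∈ Jᶜ, (Fintype.card (Z i) : ℝ))⁻¹ •
    ∑ z' ∈ Finset.univ.filter (fun z' : ∀ i, Z i => ∀ i ∈ J, z' i = z i), w z'

/-- Interaction projection Q_I. -/
noncomputable def Qop {ι : Type*} [Fintype ι] [DecidableEq ι] {Z : ι → Type*} [∀ i, Fintype (Z i)]
    [∀ i, DecidableEq (Z i)] {V : Type*} [AddCommGroup V] [Module ℝ V]
    (I : Finset ι) (w : (∀ i, Z i) → V) : (∀ i, Z i) → V :=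
  ∑ J ∈ I.powerset, ((-1 : ℝ) ^ (I \ J).card) • piAvg J w

/-- Pure interaction space E_I. -/
def pureInteraction {ι : Type*} [Fintype ι] [DecidableEq ι] (Z : ι → Type*)
    [∀ i, Fintype (Z i)] [∀ i, DecidableEq (Z i)] (V : Type*) [AddCommGroup V] [Module ℝ V]
    (I : Finset ι) : Submodule ℝ ((∀ i, Z i) → V) where
  carrier := {w | (∀ z z' : ∀ i, Z i, (∀ i ∈ I, z i = z' i) → w z = w z') ∧
    ∀ J : Finset ι, J ⊂ I → ∀ z : ∀ i, Z i,
      ∑ z' ∈ Finset.univ.filter (fun z' : ∀ i, Z i => ∀ i ∈ J, z' i = z i), w z' = 0}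
  add_mem' := by
    rintro a b ⟨ha1, ha2⟩ ⟨hb1, hb2⟩
    refine ⟨fun z z' h => by simp only [Pi.add_apply, ha1 z z' h, hb1 z z' h],
      fun J hJ z => ?_⟩
    simp only [Pi.add_apply, Finset.sum_add_distrib]
    rw [ha2 J hJ z, hb2 J hJ z, add_zero]
  zero_mem' := by
    refine ⟨fun z z' _ => rfl, fun J hJ z => by simp⟩
  smul_mem' := by
    rintro c a ⟨ha1, ha2⟩
    refine ⟨fun z z' h => by simp only [Pi.smul_apply, ha1 z z' h], fun J hJ z => ?_⟩
    simp only [Pi.smul_apply, ← Finset.smul_sum]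
    rw [ha2 J hJ z, smul_zero]

/-!
The averaging operators satisfy `piAvg K ∘ piAvg J = piAvg (J ∩ K)` and `piAvg univ = id`, and
`E_I` consists of the maps fixed by `piAvg I` and killed by every `piAvg J` with `J ⊂ I`. Hence
Möbius inversion on the Boolean lattice of subsets applies: `Qop I`, the alternating sum of the
`piAvg J` over `J ⊆ I`, maps into `E_I`, is the identity on `E_I` and vanishes on `E_J` for
`J ≠ I`, and the `Qop I` sum to the identity. So `w = ∑ I, Qop I w` is a decomposition, and
applying `Qop I` to any other decomposition recovers its `I`-th component.
-/

namespace Finset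

variable {ι R M : Type*} [DecidableEq ι] [Ring R] [AddCommGroup M] [Module R M]

theorem sum_powerset_insert_neg_one_pow_smul {a : ι} {I : Finset ι} (ha : a ∉ I)
    (g : Finset ι → M) :
    ∑ J ∈ (insert a I).powerset, (-1 : R) ^ #(insert a I \ J) • g J =
      ∑ J ∈ I.powerset, (-1 : R) ^ #(I \ J) • (g (insert a J) - g J) := by
  rw [sum_powerset_insert ha, ← sum_add_distrib]
  refine sum_congr rfl fun J hJ => ?_
  have haJ : a ∉ J := fun h => ha (mem_powerset.1 hJ h)
  rw [insert_sdiff_insert, sdiff_insert_of_notMem ha, insert_sdiff_of_notMem _ haJ,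
    card_insert_of_notMem (fun h => ha (mem_sdiff.1 h).1), pow_succ, smul_sub]
  simp only [mul_neg_one, neg_smul]
  abel

theorem sum_powerset_neg_one_pow_smul_eq_zero {a : ι} {I : Finset ι} (ha : a ∈ I)
    {g : Finset ι → M} (hg : ∀ J, g (insert a J) = g J) :
    ∑ J ∈ I.powerset, (-1 : R) ^ #(I \ J) • g J = 0 := by
  rw [← insert_erase ha, sum_powerset_insert_neg_one_pow_smul (notMem_erase a I)]
  simp [hg]

theorem sum_powerset_sum_powerset_neg_one_pow_smul (S : Finset ι) (g : Finset ι → M) :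
    ∑ I ∈ S.powerset, ∑ J ∈ I.powerset, (-1 : R) ^ #(I \ J) • g J = g S := by
  induction S using Finset.induction_on generalizing g with
  | empty => simp
  | insert a S ha ih =>
    rw [sum_powerset_insert ha, ← ih (fun J => g (insert a J)), ← sum_add_distrib]
    refine sum_congr rfl fun I hI => ?_
    rw [sum_powerset_insert_neg_one_pow_smul (fun h => ha (mem_powerset.1 hI h))]
    simp only [smul_sub, sum_sub_distrib]
    abel

end Finset

section Fibers

variable {ι : Type*} [Fintype ι] [DecidableEq ι] {Z : ι → Type*} [∀ i, Fintype (Z i)]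
  [∀ i, DecidableEq (Z i)]

def fiber (J : Finset ι) (z : ∀ i, Z i) : Finset (∀ i, Z i) :=
  univ.filter fun z' => ∀ i ∈ J, z' i = z i

theorem mem_fiber {J : Finset ι} {z z' : ∀ i, Z i} : z' ∈ fiber J z ↔ ∀ i ∈ J, z' i = z i := by
  simp [fiber]

theorem fiber_congr {J : Finset ι} {z z' : ∀ i, Z i} (h : ∀ i ∈ J, z i = z' i) :
    fiber J z = fiber J z' := by
  ext z''
  simp only [mem_fiber]
  grind

theorem card_fiber (J : Finset ι) (z : ∀ i, Z i) :
    #(fiber J z) = ∏ i ∈ Jᶜ, Fintype.card (Z i) := by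
  have : fiber J z = Fintype.piFinset fun i => if i ∈ J then {z i} else univ := by
    ext z'
    simp only [mem_fiber, Fintype.mem_piFinset]
    grind
  rw [this, Fintype.card_piFinset, ← prod_mul_prod_compl J]
  rw [prod_eq_one fun i hi => by rw [if_pos hi, card_singleton], one_mul]
  exact prod_congr rfl fun i hi => by rw [if_neg (mem_compl.1 hi), card_univ]

/-- A pair `z' ∈ fiber K z`, `z'' ∈ fiber J z'` is a `z'' ∈ fiber (J ∩ K) z` together with a free
choice of the coordinates of `z'` outside `J ∪ K`. -/
theorem sum_fiber_sum_fiber {M : Type*} [AddCommMonoid M] (J K : Finset ι)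
    (w : (∀ i, Z i) → M) (z : ∀ i, Z i) :
    ∑ z' ∈ fiber K z, ∑ z'' ∈ fiber J z', w z'' =
      (∏ i ∈ (J ∪ K)ᶜ, Fintype.card (Z i)) • ∑ z'' ∈ fiber (J ∩ K) z, w z'' := by
  rw [sum_comm' (t' := fiber (J ∩ K) z) (s' := fun z'' => fiber (J ∪ K) (K.piecewise z z''))]
  · simp only [sum_const, card_fiber, smul_sum]
  · intro z' z''
    simp only [mem_fiber, Finset.piecewise, mem_union, mem_inter]
    grind

end Fibers

section Averaging

variable {ι : Type*} [Fintype ι] [DecidableEq ι] {Z : ι → Type*} [∀ i, Fintype (Z i)]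
  [∀ i, DecidableEq (Z i)] {V : Type*} [AddCommGroup V] [Module ℝ V]

theorem piAvg_apply (J : Finset ι) (w : (∀ i, Z i) → V) (z : ∀ i, Z i) :
    piAvg J w z = (∏ i ∈ Jᶜ, (Fintype.card (Z i) : ℝ))⁻¹ • ∑ z' ∈ fiber J z, w z' := rfl

theorem piAvg_piAvg [∀ i, Nonempty (Z i)] (J K : Finset ι) (w : (∀ i, Z i) → V) :
    piAvg K (piAvg J w) = piAvg (J ∩ K) w := by
  funext z
  simp only [piAvg_apply, ← smul_sum, sum_fiber_sum_fiber, ← Nat.cast_smul_eq_nsmul ℝ, smul_smul]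
  congr 1
  have h := prod_union_inter (s₁ := Jᶜ) (s₂ := Kᶜ) (f := fun i => (Fintype.card (Z i) : ℝ))
  rw [← compl_inter, ← compl_union] at h
  have h1 : (∏ i ∈ (J ∩ K)ᶜ, (Fintype.card (Z i) : ℝ)) ≠ 0 := by positivity
  have h2 : (∏ i ∈ Kᶜ, (Fintype.card (Z i) : ℝ)) ≠ 0 := by positivity
  have h3 : (∏ i ∈ Jᶜ, (Fintype.card (Z i) : ℝ)) ≠ 0 := by positivity
  push_cast
  field_simp
  linear_combination h

theorem dependsOn_piAvg (J : Finset ι) (w : (∀ i, Z i) → V) : DependsOn (piAvg J w) J :=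
  fun z z' h => by rw [piAvg_apply, piAvg_apply, fiber_congr h]

theorem piAvg_eq_self_of_dependsOn [∀ i, Nonempty (Z i)] {J : Finset ι} {w : (∀ i, Z i) → V}
    (hw : DependsOn w J) : piAvg J w = w := by
  funext z
  rw [piAvg_apply, sum_congr rfl fun z' hz' => hw (mem_fiber.1 hz'), sum_const, card_fiber,
    ← Nat.cast_smul_eq_nsmul ℝ, Nat.cast_prod, inv_smul_smul₀ (by positivity)]

theorem piAvg_univ [∀ i, Nonempty (Z i)] (w : (∀ i, Z i) → V) : piAvg univ w = w :=
  piAvg_eq_self_of_dependsOn (by simpa using dependsOn_univ w)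

theorem piAvg_eq_zero_iff [∀ i, Nonempty (Z i)] {J : Finset ι} {w : (∀ i, Z i) → V} :
    piAvg J w = 0 ↔ ∀ z, ∑ z' ∈ fiber J z, w z' = 0 := by
  have : (∏ i ∈ Jᶜ, (Fintype.card (Z i) : ℝ))⁻¹ ≠ 0 := by positivity
  simp only [funext_iff, piAvg_apply, Pi.zero_apply, smul_eq_zero, this, false_or]

theorem mem_pureInteraction {I : Finset ι} {w : (∀ i, Z i) → V} :
    w ∈ pureInteraction Z V I ↔ DependsOn w I ∧ ∀ J ⊂ I, ∀ z, ∑ z' ∈ fiber J z, w z' = 0 :=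
  Iff.rfl

theorem mem_pureInteraction_iff_piAvg [∀ i, Nonempty (Z i)] {I : Finset ι}
    {w : (∀ i, Z i) → V} :
    w ∈ pureInteraction Z V I ↔ piAvg I w = w ∧ ∀ J ⊂ I, piAvg J w = 0 := by
  simp only [mem_pureInteraction, piAvg_eq_zero_iff]
  exact and_congr_left' ⟨piAvg_eq_self_of_dependsOn, fun h => h ▸ dependsOn_piAvg I w⟩

theorem piAvg_of_mem_pureInteraction [∀ i, Nonempty (Z i)] {I : Finset ι} {w : (∀ i, Z i) → V}
    (hw : w ∈ pureInteraction Z V I) (J : Finset ι) : piAvg J w = if I ⊆ J then w else 0 := by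
  obtain ⟨hfix, hzero⟩ := mem_pureInteraction_iff_piAvg.1 hw
  calc piAvg J w = piAvg (I ∩ J) w := by rw [← piAvg_piAvg, hfix]
    _ = if I ⊆ J then w else 0 := by
      split_ifs with hIJ
      · rw [inter_eq_left.2 hIJ, hfix]
      · exact hzero _ (inter_subset_left.ssubset_of_ne (mt inter_eq_left.1 hIJ))

noncomputable def piAvgₗ (J : Finset ι) : ((∀ i, Z i) → V) →ₗ[ℝ] ((∀ i, Z i) → V) where
  toFun := piAvg J
  map_add' w w' := by
    funext z
    simp only [piAvg_apply, Pi.add_apply, sum_add_distrib, smul_add]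
  map_smul' c w := by
    funext z
    simp only [piAvg_apply, Pi.smul_apply, ← smul_sum, RingHom.id_apply, smul_comm c]

@[simp]
theorem coe_piAvgₗ (J : Finset ι) : ⇑(piAvgₗ (Z := Z) (V := V) J) = piAvg J := rfl

noncomputable def Qopₗ (I : Finset ι) : ((∀ i, Z i) → V) →ₗ[ℝ] ((∀ i, Z i) → V) :=
  ∑ J ∈ I.powerset, (-1 : ℝ) ^ #(I \ J) • piAvgₗ J

@[simp]
theorem coe_Qopₗ (I : Finset ι) : ⇑(Qopₗ (Z := Z) (V := V) I) = Qop I := by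
  funext w
  simp [Qopₗ, Qop]

theorem piAvg_Qop [∀ i, Nonempty (Z i)] (I K : Finset ι) (w : (∀ i, Z i) → V) :
    piAvg K (Qop I w) = ∑ J ∈ I.powerset, (-1 : ℝ) ^ #(I \ J) • piAvg (J ∩ K) w := by
  simp only [Qop, ← coe_piAvgₗ, map_sum, map_smul]
  simp only [coe_piAvgₗ, piAvg_piAvg]

theorem Qop_mem_pureInteraction [∀ i, Nonempty (Z i)] (I : Finset ι) (w : (∀ i, Z i) → V) :
    Qop I w ∈ pureInteraction Z V I := by
  refine mem_pureInteraction_iff_piAvg.2 ⟨?_, fun K hK => ?_⟩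
  · rw [piAvg_Qop]
    exact sum_congr rfl fun J hJ => by rw [inter_eq_left.2 (mem_powerset.1 hJ)]
  · obtain ⟨a, haI, haK⟩ := exists_of_ssubset hK
    rw [piAvg_Qop]
    exact sum_powerset_neg_one_pow_smul_eq_zero haI fun J => by rw [insert_inter_of_notMem haK]

theorem sum_Qop [∀ i, Nonempty (Z i)] (w : (∀ i, Z i) → V) : ∑ I, Qop I w = w := by
  simpa [Qop, piAvg_univ] using
    sum_powerset_sum_powerset_neg_one_pow_smul (R := ℝ) univ fun J => piAvg J w

theorem Qop_eq_self_of_mem_pureInteraction [∀ i, Nonempty (Z i)] {I : Finset ι}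
    {w : (∀ i, Z i) → V} (hw : w ∈ pureInteraction Z V I) : Qop I w = w := by
  rw [Qop, sum_eq_single_of_mem I (mem_powerset_self I)]
  · simp [piAvg_of_mem_pureInteraction hw]
  · intro J hJ hne
    rw [piAvg_of_mem_pureInteraction hw,
      if_neg fun h => hne (subset_antisymm (mem_powerset.1 hJ) h), smul_zero]

theorem Qop_eq_zero_of_mem_pureInteraction_of_ne [∀ i, Nonempty (Z i)] {I J : Finset ι}
    {w : (∀ i, Z i) → V} (hw : w ∈ pureInteraction Z V J) (hne : J ≠ I) : Qop I w = 0 := by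
  simp only [Qop, piAvg_of_mem_pureInteraction hw]
  by_cases hJI : J ⊆ I
  · obtain ⟨a, haI, haJ⟩ := exists_of_ssubset (hJI.ssubset_of_ne hne)
    exact sum_powerset_neg_one_pow_smul_eq_zero haI fun K => by
      simp only [subset_insert_iff_of_notMem haJ]
  · exact sum_eq_zero fun K hK => by
      rw [if_neg fun hJK => hJI (hJK.trans (mem_powerset.1 hK)), smul_zero]

theorem Qop_sum_eq_of_mem_pureInteraction [∀ i, Nonempty (Z i)] {s : Finset (Finset ι)}
    {f : Finset ι → (∀ i, Z i) → V} (hf : ∀ J ∈ s, f J ∈ pureInteraction Z V J) {I : Finset ι}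
    (hI : I ∈ s) : Qop I (∑ J ∈ s, f J) = f I := by
  rw [← coe_Qopₗ, map_sum, coe_Qopₗ, sum_eq_single_of_mem I hI fun J hJ hne =>
    Qop_eq_zero_of_mem_pureInteraction_of_ne (hf J hJ) hne]
  exact Qop_eq_self_of_mem_pureInteraction (hf I hI)

end Averaging

theorem interaction_direct_sum_general {k : ℕ} (Z : Fin k → Type*)
    [∀ i, Fintype (Z i)] [∀ i, Nonempty (Z i)] [∀ i, DecidableEq (Z i)]
    (V : Type*) [AddCommGroup V] [Module ℝ V] :
    DirectSum.IsInternal (fun I : Finset (Fin k) => pureInteraction Z V I) ∧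
    ∀ w : (∀ i, Z i) → V, ∃! f : Finset (Fin k) → ((∀ i, Z i) → V),
      (∀ I, f I ∈ pureInteraction Z V I) ∧ w = ∑ I : Finset (Fin k), f I := by
  refine ⟨DirectSum.isInternal_submodule_of_iSupIndep_of_iSup_eq_top ?_ ?_, fun w => ?_⟩
  · rw [iSupIndep_iff_finsetSum_eq_zero_imp_eq_zero]
    intro s v hv hsum I hI
    rw [← Qop_sum_eq_of_mem_pureInteraction hv hI, hsum, ← coe_Qopₗ, map_zero]
  · refine eq_top_iff.2 fun w _ => sum_Qop w ▸ Submodule.sum_mem _ fun I _ => ?_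
    exact Submodule.mem_iSup_of_mem I (Qop_mem_pureInteraction I w)
  · refine ⟨fun I => Qop I w, ⟨fun I => Qop_mem_pureInteraction I w, (sum_Qop w).symm⟩, ?_⟩
    rintro f ⟨hf, rfl⟩
    funext I
    exact (Qop_sum_eq_of_mem_pureInteraction (fun J _ => hf J) (mem_univ I)).symm

/-- The space of all maps `Z → V` is the internal direct sum of the pure
interaction spaces `E_I`; equivalently every `w` has a unique decomposition
`w = ∑_{I ⊆ [k]} w_I` with `w_I ∈ E_I`. -/
theorem interaction_direct_sum {k : ℕ} (hk : 1 ≤ k) (Z : Fin k → Type*)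
    [∀ i, Fintype (Z i)] [∀ i, Nonempty (Z i)] [∀ i, DecidableEq (Z i)]
    (V : Type*) [AddCommGroup V] [Module ℝ V] [FiniteDimensional ℝ V] :
    DirectSum.IsInternal (fun I : Finset (Fin k) => pureInteraction Z V I) ∧
    ∀ w : (∀ i, Z i) → V, ∃! f : Finset (Fin k) → ((∀ i, Z i) → V),
      (∀ I, f I ∈ pureInteraction Z V I) ∧ w = ∑ I : Finset (Fin k), f I :=
  interaction_direct_sum_general Z V
end

section
/- For every I ⊆ {1,…,k}, the dimension of the pure interaction space E_I equals dim(V) · ∏_{i ∈ I} (|Z_i| − 1). -/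
open Finset

/-!
Fix a base point `b`. An element of `E_I` depends only on the coordinates in `I`, and its sum over
any single coordinate `i ∈ I` vanishes. Hence it is determined by its values at the points that
differ from `b` in every coordinate of `I` and agree with `b` elsewhere: one can move coordinates
off the base point one at a time. Conversely any values at those points are attained, by the
combinations of the products `∏ i ∈ I, (δ_{a i} - δ_{b i})`. So `E_I` is isomorphic to the space
of `V`-valued functions on `∏ i ∈ I, (Z i \ {b i})`.
-/

theorem Module.finrank_fun_eq_card_mul {K A V : Type*} [DivisionRing K] [Fintype A]
    [AddCommGroup V] [Module K V] :
    Module.finrank K (A → V) = Fintype.card A * Module.finrank K V := by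
  simp [Module.finrank]

namespace PureInteraction

variable {ι : Type*} [Fintype ι] [DecidableEq ι] {Z : ι → Type*} [∀ i, Fintype (Z i)]
  [∀ i, DecidableEq (Z i)]

def cylinder (J : Finset ι) (z : ∀ i, Z i) : Finset (∀ i, Z i) :=
  univ.filter fun z' => ∀ i ∈ J, z' i = z i

@[simp]
theorem mem_cylinder {J : Finset ι} {z z' : ∀ i, Z i} :
    z' ∈ cylinder J z ↔ ∀ i ∈ J, z' i = z i := by
  simp [cylinder]

theorem cylinder_eq_piFinset (J : Finset ι) (z : ∀ i, Z i) :
    cylinder J z = Fintype.piFinset fun i => if i ∈ J then {z i} else univ := by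
  ext z'
  simp only [mem_cylinder, Fintype.mem_piFinset]
  refine forall_congr' fun i => ?_
  by_cases hi : i ∈ J <;> simp [hi]

theorem sum_cylinder_prod {R : Type*} [CommSemiring R] (J : Finset ι) (z : ∀ i, Z i)
    (f : ∀ i, Z i → R) :
    ∑ z' ∈ cylinder J z, ∏ i, f i (z' i) = ∏ i, if i ∈ J then f i (z i) else ∑ t, f i t := by
  rw [cylinder_eq_piFinset, ← prod_univ_sum]
  refine prod_congr rfl fun i _ => ?_
  by_cases hi : i ∈ J <;> simp [hi]

theorem card_cylinder (J : Finset ι) (z : ∀ i, Z i) :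
    #(cylinder J z) = ∏ i ∈ Jᶜ, Fintype.card (Z i) := by
  rw [cylinder_eq_piFinset, Fintype.card_piFinset, ← prod_mul_prod_compl J,
    prod_eq_one fun i hi => by simp [hi], one_mul]
  exact prod_congr rfl fun i hi => by simp [mem_compl.mp hi]

theorem sum_cylinder_prod_eq_zero {R : Type*} [CommSemiring R] {J : Finset ι} {i : ι}
    (hi : i ∉ J) (z : ∀ i, Z i) {f : ∀ i, Z i → R} (hf : ∑ t, f i t = 0) :
    ∑ z' ∈ cylinder J z, ∏ i, f i (z' i) = 0 := by
  rw [sum_cylinder_prod]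
  exact prod_eq_zero (mem_univ i) (by rw [if_neg hi, hf])

theorem filter_cylinder_erase {I : Finset ι} {i : ι} (hi : i ∈ I) (z : ∀ i, Z i) (t : Z i) :
    (cylinder (I.erase i) z).filter (fun z' => z' i = t) = cylinder I (Function.update z i t) := by
  ext z'
  simp only [mem_filter, mem_cylinder, mem_erase]
  constructor
  · rintro ⟨hz', rfl⟩ j hj
    by_cases hji : j = i
    · subst hji; simp
    · rw [Function.update_of_ne hji]
      exact hz' j ⟨hji, hj⟩
  · intro hz'
    refine ⟨fun j ⟨hji, hj⟩ => ?_, by simpa using hz' i hi⟩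
    simpa [Function.update_of_ne hji] using hz' j hj

variable {V : Type*} [AddCommGroup V] [Module ℝ V]

theorem mem_pureInteraction {I : Finset ι} {w : (∀ i, Z i) → V} :
    w ∈ pureInteraction Z V I ↔ (∀ z z' : ∀ i, Z i, (∀ i ∈ I, z i = z' i) → w z = w z') ∧
      ∀ J ⊂ I, ∀ z, ∑ z' ∈ cylinder J z, w z' = 0 :=
  Iff.rfl

theorem sum_update_eq_zero {I : Finset ι} {w : (∀ i, Z i) → V} (hw : w ∈ pureInteraction Z V I)
    {i : ι} (hi : i ∈ I) (z : ∀ i, Z i) : ∑ t, w (Function.update z i t) = 0 := by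
  obtain ⟨hdep, hsum⟩ := mem_pureInteraction.mp hw
  have hfiber (t : Z i) : ∑ z' ∈ (cylinder (I.erase i) z).filter (fun z' => z' i = t), w z' =
      (∏ j ∈ Iᶜ, Fintype.card (Z j)) • w (Function.update z i t) := by
    rw [filter_cylinder_erase hi, ← card_cylinder I (Function.update z i t), ← sum_const]
    exact sum_congr rfl fun z' hz' => hdep _ _ (mem_cylinder.mp hz')
  have hcard : ((∏ j ∈ Iᶜ, Fintype.card (Z j) : ℕ) : ℝ) ≠ 0 := by
    exact_mod_cast prod_ne_zero_iff.mpr fun j _ => (Fintype.card_pos_iff.mpr ⟨z j⟩).ne'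
  have := hsum (I.erase i) (erase_ssubset hi) z
  rw [← sum_fiberwise _ (fun z' => z' i), sum_congr rfl fun t _ => hfiber t, ← smul_sum,
    ← Nat.cast_smul_eq_nsmul ℝ] at this
  exact (smul_eq_zero.mp this).resolve_left hcard

variable (b : ∀ i, Z i) (I : Finset ι)

def extend (a : ∀ i : I, {t : Z i // t ≠ b i}) : ∀ i, Z i :=
  fun i => if h : i ∈ I then a ⟨i, h⟩ else b i

variable {b I}

omit [Fintype ι] [∀ i, Fintype (Z i)] [∀ i, DecidableEq (Z i)] in
theorem extend_of_mem (a : ∀ i : I, {t : Z i // t ≠ b i}) {i : ι} (hi : i ∈ I) :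
    extend b I a i = a ⟨i, hi⟩ :=
  dif_pos hi

theorem eq_zero_of_forall_extend_eq_zero {w : (∀ i, Z i) → V} (hw : w ∈ pureInteraction Z V I)
    (h : ∀ a, w (extend b I a) = 0) : w = 0 := by
  suffices ∀ n, ∀ z : ∀ i, Z i, #(I.filter fun i => z i = b i) = n → w z = 0 from
    funext fun z => this _ z rfl
  refine fun n => Nat.strong_induction_on n fun n ih z hz => ?_
  obtain hempty | ⟨i, hi⟩ := (I.filter fun i => z i = b i).eq_empty_or_nonempty
  · have hne (i : ι) (hi : i ∈ I) : z i ≠ b i := fun hzi => by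
      simpa [hempty] using (mem_filter.mpr ⟨hi, hzi⟩ : i ∈ I.filter fun i => z i = b i)
    rw [hw.1 z (extend b I fun i => ⟨z i, hne i i.2⟩) fun i hi => by rw [extend_of_mem _ hi], h]
  · obtain ⟨hiI, hzi⟩ := mem_filter.mp hi
    have hoff (t : Z i) (ht : t ≠ z i) : w (Function.update z i t) = 0 := by
      refine ih _ ?_ _ rfl
      rw [← hz]
      refine card_lt_card ((ssubset_iff_of_subset fun j hj => ?_).mpr ⟨i, hi, by simp [hzi ▸ ht]⟩)
      obtain ⟨hjI, hj⟩ := mem_filter.mp hj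
      have hji : j ≠ i := by rintro rfl; simp [hzi ▸ ht] at hj
      exact mem_filter.mpr ⟨hjI, by simpa [Function.update_of_ne hji] using hj⟩
    have := sum_update_eq_zero hw hiI z
    rwa [sum_eq_single_of_mem (z i) (mem_univ _) fun t _ ht => hoff t ht,
      Function.update_eq_self] at this

variable (b) in
def deltaSub (i : ι) (x t : Z i) : ℝ :=
  (if t = x then 1 else 0) - (if t = b i then 1 else 0)

omit [Fintype ι] [DecidableEq ι] in
theorem sum_deltaSub (i : ι) (x : Z i) : ∑ t, deltaSub b i x t = 0 := by
  simp [deltaSub, sum_sub_distrib]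

variable (b I) in
def ofPunctured (g : (∀ i : I, {t : Z i // t ≠ b i}) → V) : (∀ i, Z i) → V :=
  fun z => ∑ a, (∏ i ∈ I, deltaSub b i (extend b I a i) (z i)) • g a

theorem ofPunctured_mem (g : (∀ i : I, {t : Z i // t ≠ b i}) → V) :
    ofPunctured b I g ∈ pureInteraction Z V I := by
  refine mem_pureInteraction.mpr ⟨fun z z' hzz' => ?_, fun J hJ z => ?_⟩
  · exact sum_congr rfl fun a _ => by rw [prod_congr rfl fun i hi => by rw [hzz' i hi]]
  · obtain ⟨i, hiI, hiJ⟩ := exists_of_ssubset hJ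
    simp only [ofPunctured]
    rw [sum_comm]
    refine sum_eq_zero fun a _ => ?_
    have hprod (z' : ∀ i, Z i) : ∏ i ∈ I, deltaSub b i (extend b I a i) (z' i) =
        ∏ i, if i ∈ I then deltaSub b i (extend b I a i) (z' i) else 1 := by
      rw [prod_ite_mem, univ_inter]
    rw [← sum_smul, sum_congr rfl fun z' _ => hprod z', sum_cylinder_prod_eq_zero hiJ z
      (f := fun i t => if i ∈ I then deltaSub b i (extend b I a i) t else 1)
      (by simp only [if_pos hiI, sum_deltaSub]), zero_smul]

omit [Fintype ι] in
theorem ofPunctured_extend (g : (∀ i : I, {t : Z i // t ≠ b i}) → V)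
    (a : ∀ i : I, {t : Z i // t ≠ b i}) :
    ofPunctured b I g (extend b I a) = g a := by
  rw [ofPunctured, sum_eq_single_of_mem a (mem_univ a)]
  · rw [prod_eq_one fun i hi => by simp [deltaSub, extend_of_mem _ hi, (a ⟨i, hi⟩).2], one_smul]
  · intro a' _ ha'
    obtain ⟨⟨i, hi⟩, hne⟩ := Function.ne_iff.mp ha'
    refine smul_eq_zero_of_left (prod_eq_zero hi ?_) _
    have : (a ⟨i, hi⟩ : Z i) ≠ a' ⟨i, hi⟩ := fun h => hne (Subtype.ext h.symm)
    simp [deltaSub, extend_of_mem _ hi, this, (a ⟨i, hi⟩).2]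

variable (V b I) in
noncomputable def restrictPunctured :
    pureInteraction Z V I ≃ₗ[ℝ] ((∀ i : I, {t : Z i // t ≠ b i}) → V) :=
  LinearEquiv.ofBijective
    { toFun := fun (w : pureInteraction Z V I) a => w.1 (extend b I a)
      map_add' := fun _ _ => rfl
      map_smul' := fun _ _ => rfl }
    ⟨fun u v huv => Subtype.ext <| sub_eq_zero.mp <|
      eq_zero_of_forall_extend_eq_zero (sub_mem u.2 v.2) fun a => sub_eq_zero.mpr (congrFun huv a),
     fun g => ⟨⟨ofPunctured b I g, ofPunctured_mem g⟩, funext (ofPunctured_extend g)⟩⟩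

end PureInteraction

theorem finrank_pureInteraction_general {k : ℕ} (Z : Fin k → Type*)
    [∀ i, Fintype (Z i)] [∀ i, Nonempty (Z i)] [∀ i, DecidableEq (Z i)]
    (V : Type*) [AddCommGroup V] [Module ℝ V]
    (I : Finset (Fin k)) :
    Module.finrank ℝ (pureInteraction Z V I) =
      Module.finrank ℝ V * ∏ i ∈ I, (Fintype.card (Z i) - 1) := by
  let b : ∀ i, Z i := fun _ => Classical.arbitrary _
  rw [(PureInteraction.restrictPunctured V b I).finrank_eq, Module.finrank_fun_eq_card_mul,
    Fintype.card_pi, mul_comm, ← prod_coe_sort I]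
  simp

/-- `dim E_I = dim V · ∏_{i ∈ I} (|Z_i| − 1)`. -/
theorem finrank_pureInteraction {k : ℕ} (hk : 1 ≤ k) (Z : Fin k → Type*)
    [∀ i, Fintype (Z i)] [∀ i, Nonempty (Z i)] [∀ i, DecidableEq (Z i)]
    (V : Type*) [AddCommGroup V] [Module ℝ V] [FiniteDimensional ℝ V]
    (I : Finset (Fin k)) :
    Module.finrank ℝ (pureInteraction Z V I) =
      Module.finrank ℝ V * ∏ i ∈ I, (Fintype.card (Z i) - 1) :=
  finrank_pureInteraction_general Z V I
end

section
/- Let P : X × Y → ℝ be strictly positive with ∑_{y ∈ Y} P(x, y) = 1 for every x ∈ X, and let A, B, C be a partition of the m + n coordinate indices of X × Y; for z = (x, y) write z_A, z_B, z_C for the corresponding subtuples. The following are equivalent: (i) there exists a strictly positive probability density p on X such that the joint density q(x, y) := P(x, y) · p(x) satisfies q(z) · q_C(z_C) = q_{A∪C}(z_A, z_C) · q_{B∪C}(z_B, z_C) for all z, where the subscripted q's denote marginal densities of q; (ii) there exist functions f on the (A∪C)-subtuples, g on the (B∪C)-subtuples, and a strictly positive h : X → ℝ such that P(x, y) = f(z_A,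 z_C) · g(z_B, z_C) · h(x) for all (x, y). -/
/-! If the joint density `q = P · p` is conditionally independent, then
`q = q_{A∪C} · q_{B∪C} / q_C`, and dividing by `p` gives the factorization with `h = 1 / p`.
Conversely, if `P = f g h`, take `p` proportional to `1 / h`: then `q` is a function of the
`(A ∪ C)`-coordinates times a function of the `(B ∪ C)`-coordinates. Summing such a product
over the fibre of `z_C` splits into independent sums over the `A`- and the `B`-coordinates,
which is `q · q_C = q_{A∪C} · q_{B∪C}`. -/

open Finset
open scoped RealInnerProductSpace

universe u

/-- Combined family of factors, indexed by `Fin m ⊕ Fin n`. -/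
def sumFam {m n : ℕ} (X : Fin m → Type u) (Y : Fin n → Type u) : Fin m ⊕ Fin n → Type u :=
  Sum.elim X Y

instance sumFam.fintype {m n : ℕ} (X : Fin m → Type u) (Y : Fin n → Type u)
    [∀ i, Fintype (X i)] [∀ j, Fintype (Y j)] : ∀ s, Fintype (sumFam X Y s)
  | .inl i => inferInstanceAs (Fintype (X i))
  | .inr j => inferInstanceAs (Fintype (Y j))

instance sumFam.decEq {m n : ℕ} (X : Fin m → Type u) (Y : Fin n → Type u)
    [∀ i, DecidableEq (X i)] [∀ j, DecidableEq (Y j)] : ∀ s, DecidableEq (sumFam X Y s)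
  | .inl i => inferInstanceAs (DecidableEq (X i))
  | .inr j => inferInstanceAs (DecidableEq (Y j))

instance sumFam.nonempty {m n : ℕ} (X : Fin m → Type u) (Y : Fin n → Type u)
    [∀ i, Nonempty (X i)] [∀ j, Nonempty (Y j)] : ∀ s, Nonempty (sumFam X Y s)
  | .inl i => inferInstanceAs (Nonempty (X i))
  | .inr j => inferInstanceAs (Nonempty (Y j))

/-- A pair `(x, y)` of tuples viewed as a single tuple indexed by `Fin m ⊕ Fin n`. -/
def glue {m n : ℕ} {X : Fin m → Type u} {Y : Fin n → Type u}
    (x : ∀ i, X i) (y : ∀ j, Y j) : ∀ s, sumFam X Y s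
  | .inl i => x i
  | .inr j => y j

/-- First projection of a combined tuple. -/
def projX {m n : ℕ} {X : Fin m → Type u} {Y : Fin n → Type u}
    (z : ∀ s, sumFam X Y s) : ∀ i, X i := fun i => z (.inl i)

/-- Second projection of a combined tuple. -/
def projY {m n : ℕ} {X : Fin m → Type u} {Y : Fin n → Type u}
    (z : ∀ s, sumFam X Y s) : ∀ j, Y j := fun j => z (.inr j)

/-- The marginal density of `q` on the coordinates in `S`, viewed as a function of the
full tuple (depending only on the `S`-coordinates). -/
def marg {ι : Type*} [Fintype ι] [DecidableEq ι] {Z : ι → Type*} [∀ i, Fintype (Z i)]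
    [∀ i, DecidableEq (Z i)] (S : Finset ι) (q : (∀ i, Z i) → ℝ) (z : ∀ i, Z i) : ℝ :=
  ∑ z' ∈ Finset.univ.filter (fun z' : ∀ i, Z i => ∀ i ∈ S, z' i = z i), q z'

section Marginal

variable {ι : Type*} [Fintype ι] [DecidableEq ι] {Z : ι → Type*}
  [∀ i, Fintype (Z i)] [∀ i, DecidableEq (Z i)]

lemma marg_dependsOn (S : Finset ι) (q : (∀ i, Z i) → ℝ) : DependsOn (marg S q) ↑S := by
  intro z z' h
  unfold marg
  congr 1
  ext w
  simp only [mem_filter, mem_univ, true_and]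
  exact ⟨fun hw s hs => (hw s hs).trans (h s hs), fun hw s hs => (hw s hs).trans (h s hs).symm⟩

lemma marg_pos (S : Finset ι) {q : (∀ i, Z i) → ℝ} (hq : ∀ z, 0 < q z) (z : ∀ i, Z i) :
    0 < marg S q z :=
  sum_pos (fun w _ => hq w) ⟨z, by simp⟩

lemma dependsOn_marg_div_marg {S T : Finset ι} (hTS : T ⊆ S) (q : (∀ i, Z i) → ℝ) :
    DependsOn (fun z => marg S q z / marg T q z) ↑S := fun _ _ h => by
  dsimp only
  rw [marg_dependsOn S q h, (marg_dependsOn T q).mono (coe_subset.2 hTS) h]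

lemma marg_mul_of_dependsOn {S : Finset ι} {F : (∀ i, Z i) → ℝ} (hF : DependsOn F ↑S)
    (G : (∀ i, Z i) → ℝ) (z : ∀ i, Z i) :
    marg S (fun w => F w * G w) z = F z * marg S G z := by
  rw [marg, marg, mul_sum]
  refine sum_congr rfl fun w hw => ?_
  rw [hF (mem_filter.1 hw).2]

lemma marg_mul_eq_mul_marg {A B C : Finset ι} (hAB : Disjoint A B) (hAC : Disjoint A C)
    (hABC : A ∪ B ∪ C = univ) {F G : (∀ i, Z i) → ℝ}
    (hF : DependsOn F ↑(A ∪ C)) (hG : DependsOn G ↑(B ∪ C)) (z : ∀ i, Z i) :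
    marg C (fun w => F w * G w) z = marg (B ∪ C) F z * marg (A ∪ C) G z := by
  have hnotA : ∀ s ∉ A, s ∈ B ∪ C := fun s hs => by
    have h : s ∈ A ∪ B ∪ C := hABC ▸ mem_univ s
    simp only [mem_union] at h ⊢
    tauto
  have hBC_notA : ∀ s ∈ B ∪ C, s ∉ A := fun s hs hsA =>
    (mem_union.1 hs).elim (disjoint_left.1 hAB hsA) (disjoint_left.1 hAC hsA)
  rw [marg, marg, marg, sum_mul_sum, ← sum_product']
  -- a point agreeing with `z` on `C` splits into its `A`-part and its `(B ∪ C)`-part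
  refine sum_nbij' (fun w => (A.piecewise w z, A.piecewise z w)) (fun p => A.piecewise p.1 p.2)
    ?_ ?_ ?_ ?_ ?_
  · intro w hw
    simp only [mem_product, mem_filter, mem_univ, true_and] at hw ⊢
    refine ⟨fun s hs => piecewise_eq_of_notMem _ _ _ (hBC_notA s hs), fun s hs => ?_⟩
    by_cases hsA : s ∈ A
    · exact piecewise_eq_of_mem _ _ _ hsA
    · rw [piecewise_eq_of_notMem _ _ _ hsA]
      exact hw s ((mem_union.1 hs).resolve_left hsA)
  · rintro ⟨u, v⟩ huv
    simp only [mem_product, mem_filter, mem_univ, true_and] at huv ⊢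
    intro s hs
    rw [piecewise_eq_of_notMem _ _ _ (hBC_notA s (mem_union_right _ hs))]
    exact huv.2 s (mem_union_right _ hs)
  · intro w _
    ext s
    by_cases hs : s ∈ A <;> simp [hs]
  · rintro ⟨u, v⟩ huv
    simp only [mem_product, mem_filter, mem_univ, true_and] at huv
    ext s
    · by_cases hs : s ∈ A
      · simp [hs]
      · simp [hs, huv.1 s (hnotA s hs)]
    · by_cases hs : s ∈ A
      · simp [hs, huv.2 s (mem_union_left _ hs)]
      · simp [hs]
  · intro w hw
    simp only [mem_filter, mem_univ, true_and] at hw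
    congr 1
    · apply hF
      intro s hs
      by_cases hsA : s ∈ A
      · simp [hsA]
      · simp [hsA, hw s ((mem_union.1 hs).resolve_left hsA)]
    · apply hG
      intro s hs
      simp [hBC_notA s hs]

lemma mul_mul_marg_eq_marg_mul_marg {A B C : Finset ι} (hAB : Disjoint A B) (hAC : Disjoint A C)
    (hABC : A ∪ B ∪ C = univ) {F G : (∀ i, Z i) → ℝ}
    (hF : DependsOn F ↑(A ∪ C)) (hG : DependsOn G ↑(B ∪ C)) (z : ∀ i, Z i) :
    F z * G z * marg C (fun w => F w * G w) z =
      marg (A ∪ C) (fun w => F w * G w) z * marg (B ∪ C) (fun w => F w * G w) z := by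
  have hGF : marg (B ∪ C) (fun w => F w * G w) z = G z * marg (B ∪ C) F z := by
    simpa only [mul_comm] using marg_mul_of_dependsOn hG F z
  rw [marg_mul_eq_mul_marg hAB hAC hABC hF hG, marg_mul_of_dependsOn hF, hGF]
  ring

end Marginal

lemma glue_projX_projY {m n : ℕ} {X : Fin m → Type u} {Y : Fin n → Type u}
    (z : ∀ s, sumFam X Y s) : glue (projX z) (projY z) = z := by
  funext s
  cases s <;> rfl

theorem condIndep_iff_factorization_general {m n : ℕ}
    (X : Fin m → Type u) (Y : Fin n → Type u)
    [∀ i, Fintype (X i)] [∀ i, Nonempty (X i)] [∀ i, DecidableEq (X i)]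
    [∀ j, Fintype (Y j)] [∀ j, DecidableEq (Y j)]
    (P : (∀ i, X i) → (∀ j, Y j) → ℝ)
    (hPpos : ∀ x y, 0 < P x y)
    (A B C : Finset (Fin m ⊕ Fin n))
    (hAB : Disjoint A B) (hAC : Disjoint A C)
    (hABC : A ∪ B ∪ C = Finset.univ) :
    (∃ p : (∀ i, X i) → ℝ, (∀ x, 0 < p x) ∧ (∑ x : ∀ i, X i, p x = 1) ∧
      (∀ z : ∀ s, sumFam X Y s,
        (fun z' : ∀ s, sumFam X Y s => P (projX z') (projY z') * p (projX z')) z *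
          marg C (fun z' => P (projX z') (projY z') * p (projX z')) z =
        marg (A ∪ C) (fun z' => P (projX z') (projY z') * p (projX z')) z *
          marg (B ∪ C) (fun z' => P (projX z') (projY z') * p (projX z')) z)) ↔
    (∃ (f g : (∀ s, sumFam X Y s) → ℝ) (h : (∀ i, X i) → ℝ),
      (∀ z z' : ∀ s, sumFam X Y s, (∀ s ∈ A ∪ C, z s = z' s) → f z = f z') ∧
      (∀ z z' : ∀ s, sumFam X Y s, (∀ s ∈ B ∪ C, z s = z' s) → g z = g z') ∧
      (∀ x, 0 < h x) ∧
      (∀ (x : ∀ i, X i) (y : ∀ j, Y j), P x y = f (glue x y) * g (glue x y) * h x)) := by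
  constructor
  · rintro ⟨p, hp_pos, -, hCI⟩
    set q : (∀ s, sumFam X Y s) → ℝ := fun z => P (projX z) (projY z) * p (projX z)
    refine ⟨marg (A ∪ C) q, fun z => marg (B ∪ C) q z / marg C q z, fun x => (p x)⁻¹,
      fun _ _ hz => marg_dependsOn _ q hz,
      fun _ _ hz => dependsOn_marg_div_marg subset_union_right q hz,
      fun x => inv_pos.2 (hp_pos x), fun x y => ?_⟩
    have hxy : P x y * p x * marg C q (glue x y) =
        marg (A ∪ C) q (glue x y) * marg (B ∪ C) q (glue x y) := hCI (glue x y)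
    have hC : marg C q (glue x y) ≠ 0 :=
      (marg_pos C (fun z => mul_pos (hPpos _ _) (hp_pos _)) _).ne'
    field_simp [(hp_pos x).ne']
    linear_combination hxy
  · rintro ⟨f, g, h, hf, hg, hpos, hfac⟩
    set K := ∑ x : ∀ i, X i, (h x)⁻¹
    have hK : 0 < K := sum_pos (fun x _ => inv_pos.2 (hpos x)) univ_nonempty
    refine ⟨fun x => (h x)⁻¹ / K, fun x => div_pos (inv_pos.2 (hpos x)) hK,
      by rw [← sum_div, div_self hK.ne'], ?_⟩
    have hq : (fun z => P (projX z) (projY z) * ((h (projX z))⁻¹ / K)) =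
        fun z => f z / K * g z := by
      funext z
      rw [hfac, glue_projX_projY]
      field_simp [(hpos (projX z)).ne']
    rw [hq]
    exact mul_mul_marg_eq_marg_mul_marg hAB hAC hABC (fun _ _ hz => by rw [hf _ _ hz])
      (fun _ _ hz => hg _ _ hz)

/-- conditional independence of a partition `A, B, C` of the coordinates of
`X × Y` with respect to `P(Y|X)` (existence of a positive input density `p` making the
joint `q = P·p` conditionally independent) is equivalent to the factorization
`P(x,y) = f(z_A, z_C) · g(z_B, z_C) · h(x)` with `h` strictly positive. -/
theorem condIndep_iff_factorization {m n : ℕ}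
    (X : Fin m → Type u) (Y : Fin n → Type u)
    [∀ i, Fintype (X i)] [∀ i, Nonempty (X i)] [∀ i, DecidableEq (X i)]
    [∀ j, Fintype (Y j)] [∀ j, Nonempty (Y j)] [∀ j, DecidableEq (Y j)]
    (P : (∀ i, X i) → (∀ j, Y j) → ℝ)
    (hPpos : ∀ x y, 0 < P x y) (hPsum : ∀ x, ∑ y : ∀ j, Y j, P x y = 1)
    (A B C : Finset (Fin m ⊕ Fin n))
    (hAB : Disjoint A B) (hAC : Disjoint A C) (hBC : Disjoint B C)
    (hABC : A ∪ B ∪ C = Finset.univ) :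
    (∃ p : (∀ i, X i) → ℝ, (∀ x, 0 < p x) ∧ (∑ x : ∀ i, X i, p x = 1) ∧
      (∀ z : ∀ s, sumFam X Y s,
        (fun z' : ∀ s, sumFam X Y s => P (projX z') (projY z') * p (projX z')) z *
          marg C (fun z' => P (projX z') (projY z') * p (projX z')) z =
        marg (A ∪ C) (fun z' => P (projX z') (projY z') * p (projX z')) z *
          marg (B ∪ C) (fun z' => P (projX z') (projY z') * p (projX z')) z)) ↔
    (∃ (f g : (∀ s, sumFam X Y s) → ℝ) (h : (∀ i, X i) → ℝ),
      (∀ z z' : ∀ s, sumFam X Y s, (∀ s ∈ A ∪ C, z s = z' s) → f z = f z') ∧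
      (∀ z z' : ∀ s, sumFam X Y s, (∀ s ∈ B ∪ C, z s = z' s) → g z = g z') ∧
      (∀ x, 0 < h x) ∧
      (∀ (x : ∀ i, X i) (y : ∀ j, Y j), P x y = f (glue x y) * g (glue x y) * h x)) :=
  condIndep_iff_factorization_general X Y P hPpos A B C hAB hAC hABC
end

section
/- Let w : X × Y → ℝ be defined by w(x, y) = ⟨u(x), v(y)⟩, regarded as a map on the (m + n)-fold product X_1 × ⋯ × X_m × Y_1 × ⋯ × Y_n. Then for every I ⊆ {1,…,m} and J ⊆ {1,…,n}, the (I ⊔ J)-interaction component of w equals the map (x, y) ↦ ⟨(Q_I u)(x), (Q_J v)(y)⟩, i.e., Q_{I⊔J} w = ⟨Q_I u, Q_J v⟩ pointwise. -/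
open Finset
open scoped RealInnerProductSpace

universe u

/-!
For a bilinear `b`, averaging `(x, y) ↦ b (u x) (v y)` over the coordinates outside `A ⊔ B`
factorises as `b (π_A u) (π_B v)`: both the set of tuples agreeing with `z` on `A ⊔ B` and
the normalising constant split along `α ⊕ β`. The subsets of `I ⊔ J` are exactly the
`A ⊔ B` with `A ⊆ I`, `B ⊆ J`, and the sign `(-1) ^ |(I ⊔ J) \ (A ⊔ B)|` splits as well, so
expanding `Q_{I ⊔ J}` and using bilinearity gives `Q_{I ⊔ J} w = b (Q_I u) (Q_J v)`; the
inner product is the case `b = innerₗ V`.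
-/

namespace Finset

variable {α β : Type*}

lemma sum_powerset_disjSum {M : Type*} [AddCommMonoid M] (s : Finset α) (t : Finset β)
    (f : Finset (α ⊕ β) → M) :
    ∑ u ∈ (s.disjSum t).powerset, f u =
      ∑ a ∈ s.powerset, ∑ b ∈ t.powerset, f (a.disjSum b) := by
  rw [← sum_product']
  exact sum_equiv sumEquiv.toEquiv (by simp [subset_disjSum]) (by simp [toLeft_disjSum_toRight])

lemma compl_disjSum [DecidableEq α] [DecidableEq β] [Fintype α] [Fintype β]
    (s : Finset α) (t : Finset β) : (s.disjSum t)ᶜ = sᶜ.disjSum tᶜ := by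
  ext (a | b) <;> simp

lemma disjSum_sdiff_disjSum [DecidableEq α] [DecidableEq β]
    (s s' : Finset α) (t t' : Finset β) :
    s.disjSum t \ s'.disjSum t' = (s \ s').disjSum (t \ t') := by
  ext (a | b) <;> simp

end Finset

open Finset

section SumIndexed

variable {α β : Type*} [Fintype α] [Fintype β] [DecidableEq α] [DecidableEq β]
  {Z : α ⊕ β → Type*} [∀ s, Fintype (Z s)] [∀ s, DecidableEq (Z s)]

lemma sum_filter_agree_disjSum {M : Type*} [AddCommMonoid M] (A : Finset α) (B : Finset β)
    (z : ∀ s, Z s) (g : (∀ a, Z (.inl a)) → (∀ b, Z (.inr b)) → M) :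
    ∑ z' ∈ univ.filter (fun z' : ∀ s, Z s => ∀ s ∈ A.disjSum B, z' s = z s),
        g (fun a => z' (.inl a)) (fun b => z' (.inr b)) =
      ∑ x ∈ univ.filter (fun x : ∀ a, Z (.inl a) => ∀ a ∈ A, x a = z (.inl a)),
        ∑ y ∈ univ.filter (fun y : ∀ b, Z (.inr b) => ∀ b ∈ B, y b = z (.inr b)),
          g x y := by
  rw [← sum_product', ← filter_product, univ_product_univ]
  exact sum_equiv (Equiv.sumPiEquivProdPi Z) (by simp [Sum.forall]) (by simp)

variable {V W M : Type*} [AddCommGroup V] [Module ℝ V] [AddCommGroup W] [Module ℝ W]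
  [AddCommGroup M] [Module ℝ M]

lemma piAvg_disjSum_bilin (b : V →ₗ[ℝ] W →ₗ[ℝ] M) (u : (∀ a, Z (.inl a)) → V)
    (v : (∀ b, Z (.inr b)) → W) (A : Finset α) (B : Finset β) (z : ∀ s, Z s) :
    piAvg (A.disjSum B)
        (fun z' : ∀ s, Z s => b (u fun a => z' (.inl a)) (v fun b => z' (.inr b))) z =
      b (piAvg A u fun a => z (.inl a)) (piAvg B v fun b => z (.inr b)) := by
  simp only [piAvg, map_smul, map_sum, LinearMap.smul_apply, LinearMap.sum_apply]
  rw [compl_disjSum, prod_disjSum, mul_inv, mul_smul,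
    sum_filter_agree_disjSum (g := fun x y => b (u x) (v y)), ← smul_sum, smul_comm, sum_comm]

lemma Qop_disjSum_bilin (b : V →ₗ[ℝ] W →ₗ[ℝ] M) (u : (∀ a, Z (.inl a)) → V)
    (v : (∀ b, Z (.inr b)) → W) (I : Finset α) (J : Finset β) (z : ∀ s, Z s) :
    Qop (I.disjSum J)
        (fun z' : ∀ s, Z s => b (u fun a => z' (.inl a)) (v fun b => z' (.inr b))) z =
      b (Qop I u fun a => z (.inl a)) (Qop J v fun b => z (.inr b)) := by
  simp only [Qop, Finset.sum_apply, Pi.smul_apply, map_sum, map_smul, LinearMap.sum_apply,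
    LinearMap.smul_apply]
  rw [sum_powerset_disjSum (M := M), sum_comm]
  refine sum_congr rfl fun B _ => ?_
  rw [smul_sum]
  refine sum_congr rfl fun A _ => ?_
  rw [disjSum_sdiff_disjSum, card_disjSum, pow_add, mul_smul, piAvg_disjSum_bilin, smul_comm]

end SumIndexed

theorem Qop_inner_eq_inner_Qop_general {m n : ℕ}
    (X : Fin m → Type u) (Y : Fin n → Type u)
    [∀ i, Fintype (X i)] [∀ i, DecidableEq (X i)]
    [∀ j, Fintype (Y j)] [∀ j, DecidableEq (Y j)]
    (V : Type*) [NormedAddCommGroup V] [InnerProductSpace ℝ V]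
    (u : (∀ i, X i) → V) (v : (∀ j, Y j) → V)
    (I : Finset (Fin m)) (J : Finset (Fin n)) :
    ∀ z : ∀ s, sumFam X Y s,
      Qop (I.disjSum J) (fun z' : ∀ s, sumFam X Y s => ⟪u (projX z'), v (projY z')⟫) z =
        ⟪Qop I u (projX z), Qop J v (projY z)⟫ :=
  fun z => (Qop_disjSum_bilin (innerₗ V) u v I J z :)

/-- for `w(x,y) = ⟨u(x), v(y)⟩` viewed as a map on the `(m+n)`-fold product,
the `(I ⊔ J)`-interaction component of `w` is `(x,y) ↦ ⟨(Q_I u)(x), (Q_J v)(y)⟩`. -/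
theorem Qop_inner_eq_inner_Qop {m n : ℕ}
    (X : Fin m → Type u) (Y : Fin n → Type u)
    [∀ i, Fintype (X i)] [∀ i, Nonempty (X i)] [∀ i, DecidableEq (X i)]
    [∀ j, Fintype (Y j)] [∀ j, Nonempty (Y j)] [∀ j, DecidableEq (Y j)]
    (V : Type*) [NormedAddCommGroup V] [InnerProductSpace ℝ V] [FiniteDimensional ℝ V]
    (u : (∀ i, X i) → V) (v : (∀ j, Y j) → V)
    (I : Finset (Fin m)) (J : Finset (Fin n)) :
    ∀ z : ∀ s, sumFam X Y s,
      Qop (I.disjSum J) (fun z' : ∀ s, sumFam X Y s => ⟪u (projX z'), v (projY z')⟫) z =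
        ⟪Qop I u (projX z), Qop J v (projY z)⟫ :=
  Qop_inner_eq_inner_Qop_general X Y V u v I J
end

section
/- Let I, J, K be a partition of {1,…,m} and let Y_0 ⊆ Y satisfy Span{v(y) − v(y') : y, y' ∈ Y_0} = V. If there exist functions f(y, x_I, x_K), g(y, x_J, x_K) and h(x) such that P(y|x) = f(y, x_I, x_K) · g(y, x_J, x_K) · h(x) for all x ∈ X and all y ∈ Y_0, then u_H = 0 for every H ⊆ {1,…,m} with H ∩ I ≠ ∅ and H ∩ J ≠ ∅; consequently the same factorization (with possibly different f, g, h) holds for all x ∈ X and all y ∈ Y. -/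
open Finset
open scoped RealInnerProductSpace

/-!
On `Y₀` the factorization makes `⟪u x, v y - v y'⟫ = log P(y|x) - log P(y'|x)` a function of
`x_{I∪K}` plus a function of `x_{J∪K}`. The directions `d` for which `⟪u ·, d⟫` splits this way
form a subspace, so by the spanning hypothesis all of them do, and expanding `u` in an orthonormal
basis gives `u = a + b` with `a` depending only on `x_{I∪K}` and `b` only on `x_{J∪K}`.
The alternating sum defining `Q_H` annihilates every map that ignores some coordinate `j ∈ H`,
because the terms indexed by `T` and `T ∪ {j}` cancel; for `H` meeting both `I` and `J` this
kills `a` and `b`. Finally `exp ⟪a x, v y⟫ · exp ⟪b x, v y⟫ / Z(x)` factorizes `P` on all of `Y`.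
-/

open Function

section DependsOn

variable {ι : Type*} {Z : ι → Type*} (R : Type*) {M : Type*} [Semiring R] [AddCommMonoid M]
  [Module R M]

def dependsOnSubmodule (s : Set ι) : Submodule R ((∀ i, Z i) → M) where
  carrier := {w | DependsOn w s}
  add_mem' ha hb _ _ h := by simp only [Pi.add_apply, ha h, hb h]
  zero_mem' _ _ _ := rfl
  smul_mem' c _ hw _ _ h := by simp only [Pi.smul_apply, hw h]

variable {R}

lemma map_compLeft_dependsOnSubmodule_le {N : Type*} [AddCommMonoid N] [Module R N]
    (f : M →ₗ[R] N) (s : Set ι) :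
    (dependsOnSubmodule (Z := Z) R s).map (f.compLeft _) ≤ dependsOnSubmodule R s := by
  rintro _ ⟨w, hw, rfl⟩ x y h
  exact congrArg f (hw h)

end DependsOn

lemma DependsOn.apply_update {ι : Type*} [DecidableEq ι] {Z : ι → Type*} {β : Type*}
    {w : (∀ i, Z i) → β} {s : Set ι} (hw : DependsOn w s) {j : ι} (hj : j ∉ s)
    (x : ∀ i, Z i) (t : Z j) : w (Function.update x j t) = w x :=
  hw fun _ hi => Function.update_of_ne (ne_of_mem_of_not_mem hi hj) _ _

section FiberSum

variable {ι : Type*} [Fintype ι] [DecidableEq ι] {Z : ι → Type*}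
  [∀ i, Fintype (Z i)] [∀ i, DecidableEq (Z i)] {M : Type*} [AddCommMonoid M]

lemma sum_agreeOn_eq_card_smul_sum_agreeOn_insert {j : ι} {J : Finset ι} (hjJ : j ∉ J)
    {w : (∀ i, Z i) → M} (hw : ∀ x t, w (update x j t) = w x) (z : ∀ i, Z i) :
    ∑ z' ∈ univ.filter (fun z' : ∀ i, Z i => ∀ i ∈ J, z' i = z i), w z' =
      Fintype.card (Z j) •
        ∑ z' ∈ univ.filter (fun z' : ∀ i, Z i => ∀ i ∈ insert j J, z' i = z i), w z' := by
  rw [← sum_fiberwise_of_maps_to (g := fun z' => z' j) (t := univ) fun _ _ => mem_univ _,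
    ← card_univ, ← sum_const]
  refine sum_congr rfl fun t _ => ?_
  refine sum_nbij' (fun z' => update z' j (z j)) (fun z' => update z' j t) ?_ ?_ ?_ ?_
    fun z' _ => (hw z' (z j)).symm
  all_goals grind

end FiberSum

section InteractionDecomposition

variable {ι : Type*} [Fintype ι] [DecidableEq ι] {Z : ι → Type*}
  [∀ i, Fintype (Z i)] [∀ i, DecidableEq (Z i)] {V : Type*} [AddCommGroup V] [Module ℝ V]

lemma piAvg_add (J : Finset ι) (a b : (∀ i, Z i) → V) :
    piAvg J (a + b) = piAvg J a + piAvg J b := by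
  funext z
  simp only [piAvg, Pi.add_apply, sum_add_distrib, smul_add]

lemma Qop_add (H : Finset ι) (a b : (∀ i, Z i) → V) :
    Qop H (a + b) = Qop H a + Qop H b := by
  simp only [Qop, piAvg_add, smul_add, sum_add_distrib]

variable [∀ i, Nonempty (Z i)]

lemma piAvg_insert_of_dependsOn {j : ι} {J : Finset ι} (hjJ : j ∉ J) {s : Set ι} (hjs : j ∉ s)
    {w : (∀ i, Z i) → V} (hw : DependsOn w s) : piAvg (insert j J) w = piAvg J w := by
  funext z
  have hcard : (Fintype.card (Z j) : ℝ) ≠ 0 := Nat.cast_ne_zero.2 Fintype.card_ne_zero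
  simp only [piAvg]
  rw [sum_agreeOn_eq_card_smul_sum_agreeOn_insert hjJ (hw.apply_update hjs), compl_insert,
    ← mul_prod_erase _ _ (mem_compl.2 hjJ), ← Nat.cast_smul_eq_nsmul ℝ, smul_smul, mul_inv,
    mul_right_comm, inv_mul_cancel₀ hcard, one_mul]

lemma Qop_eq_zero_of_dependsOn {H : Finset ι} {j : ι} (hjH : j ∈ H) {s : Set ι} (hjs : j ∉ s)
    {w : (∀ i, Z i) → V} (hw : DependsOn w s) : Qop H w = 0 := by
  rw [Qop, ← insert_erase hjH, sum_powerset_insert (notMem_erase j H), ← sum_add_distrib]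
  refine sum_eq_zero fun T hT => ?_
  have hjT : j ∉ T := fun h => notMem_erase j H (mem_powerset.1 hT h)
  rw [piAvg_insert_of_dependsOn hjT hjs hw, insert_sdiff_insert, sdiff_insert_of_notMem
    (notMem_erase j H), insert_sdiff_of_notMem _ hjT, card_insert_of_notMem
    (fun h => notMem_erase j H (mem_sdiff.1 h).1), pow_succ, ← add_smul]
  simp

end InteractionDecomposition

section InnerProduct

variable {ι : Type*} {Z : ι → Type*} {V : Type*} [NormedAddCommGroup V] [InnerProductSpace ℝ V]
  [FiniteDimensional ℝ V]

lemma mem_dependsOnSubmodule_sup_of_span_eq_top {s t : Set ι} {D : Set V}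
    (hD : Submodule.span ℝ D = ⊤) {w : (∀ i, Z i) → V}
    (hw : ∀ d ∈ D, (fun x => ⟪w x, d⟫) ∈ dependsOnSubmodule ℝ s ⊔ dependsOnSubmodule ℝ t) :
    w ∈ dependsOnSubmodule ℝ s ⊔ dependsOnSubmodule ℝ t := by
  let L : V →ₗ[ℝ] (∀ i, Z i) → ℝ := LinearMap.pi fun x => innerₗ V (w x)
  have hL : ∀ d, L d ∈ dependsOnSubmodule ℝ s ⊔ dependsOnSubmodule ℝ t := fun d =>
    (Submodule.span_le (p := (dependsOnSubmodule ℝ s ⊔ dependsOnSubmodule ℝ t).comap L)).2 hw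
      (hD ▸ Submodule.mem_top)
  let e := stdOrthonormalBasis ℝ V
  have hexp : w = ∑ k, ((LinearMap.toSpanSingleton ℝ V (e k)).compLeft _) (L (e k)) := by
    funext x
    conv_lhs => rw [← e.sum_repr' (w x)]
    simp [L, real_inner_comm]
  rw [hexp]
  refine Submodule.sum_mem _ fun k _ => ?_
  refine (?_ : Submodule.map _ _ ≤ _) (Submodule.mem_map_of_mem (hL (e k)))
  rw [Submodule.map_sup]
  exact sup_le_sup (map_compLeft_dependsOnSubmodule_le _ _)
    (map_compLeft_dependsOnSubmodule_le _ _)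

end InnerProduct

section Softmax

open Real

variable {Y : Type*} [Fintype Y]

lemma exp_div_sum_exp_pos (s : Y → ℝ) (y : Y) : 0 < exp (s y) / ∑ y', exp (s y') :=
  div_pos (exp_pos _) (sum_pos (fun _ _ => exp_pos _) ⟨y, mem_univ y⟩)

lemma log_exp_div_sum_exp (s : Y → ℝ) (y : Y) :
    log (exp (s y) / ∑ y', exp (s y')) = s y - log (∑ y', exp (s y')) := by
  rw [log_div (exp_ne_zero _) (sum_pos (fun _ _ => exp_pos _) ⟨y, mem_univ y⟩).ne', log_exp]

end Softmax

lemma Real.log_sub_log_of_eq_mul_mul {p p' a a' b b' c : ℝ} (hp : p = a * b * c)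
    (hp' : p' = a' * b' * c) (hp0 : p ≠ 0) (hp'0 : p' ≠ 0) :
    log p - log p' = (log a - log a') + (log b - log b') := by
  subst hp hp'
  simp only [ne_eq, mul_eq_zero, not_or] at hp0 hp'0
  rw [log_mul (mul_ne_zero hp0.1.1 hp0.1.2) hp0.2, log_mul hp0.1.1 hp0.1.2,
    log_mul (mul_ne_zero hp'0.1.1 hp'0.1.2) hp'0.2, log_mul hp'0.1.1 hp'0.1.2]
  ring

theorem uH_eq_zero_of_span_general {m : ℕ}
    (X : Fin m → Type*) [∀ i, Fintype (X i)] [∀ i, Nonempty (X i)] [∀ i, DecidableEq (X i)]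
    (Y : Type*) [Fintype Y]
    (V : Type*) [NormedAddCommGroup V] [InnerProductSpace ℝ V] [FiniteDimensional ℝ V]
    (u : (∀ i, X i) → V) (v : Y → V)
    (P : (∀ i, X i) → Y → ℝ)
    (hP : ∀ x y, P x y = Real.exp ⟪u x, v y⟫ / ∑ y' : Y, Real.exp ⟪u x, v y'⟫)
    (I J K : Finset (Fin m))
    (hIJ : Disjoint I J) (hIK : Disjoint I K) (hJK : Disjoint J K)
    (Y₀ : Set Y)
    (hspan : Submodule.span ℝ {d : V | ∃ y ∈ Y₀, ∃ y' ∈ Y₀, d = v y - v y'} = ⊤)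
    (hfact : ∃ (f g : Y → (∀ i, X i) → ℝ) (h : (∀ i, X i) → ℝ),
      (∀ (y : Y) (x x' : ∀ i, X i), (∀ i ∈ I ∪ K, x i = x' i) → f y x = f y x') ∧
      (∀ (y : Y) (x x' : ∀ i, X i), (∀ i ∈ J ∪ K, x i = x' i) → g y x = g y x') ∧
      (∀ (x : ∀ i, X i), ∀ y ∈ Y₀, P x y = f y x * g y x * h x)) :
    (∀ H : Finset (Fin m), (H ∩ I).Nonempty → (H ∩ J).Nonempty → Qop H u = 0) ∧
    (∃ (f g : Y → (∀ i, X i) → ℝ) (h : (∀ i, X i) → ℝ),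
      (∀ (y : Y) (x x' : ∀ i, X i), (∀ i ∈ I ∪ K, x i = x' i) → f y x = f y x') ∧
      (∀ (y : Y) (x x' : ∀ i, X i), (∀ i ∈ J ∪ K, x i = x' i) → g y x = g y x') ∧
      (∀ (x : ∀ i, X i) (y : Y), P x y = f y x * g y x * h x)) := by
  obtain ⟨f, g, h, hf, hg, hPfgh⟩ := hfact
  have hP0 : ∀ x y, P x y ≠ 0 := fun x y => hP x y ▸ (exp_div_sum_exp_pos (fun y => ⟪u x, v y⟫) y).ne'
  have hsep : u ∈ dependsOnSubmodule ℝ ↑(I ∪ K) ⊔ dependsOnSubmodule ℝ ↑(J ∪ K) := by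
    refine mem_dependsOnSubmodule_sup_of_span_eq_top hspan ?_
    rintro _ ⟨y, hy, y', hy', rfl⟩
    have hlog : ∀ x, ⟪u x, v y - v y'⟫ = (Real.log (f y x) - Real.log (f y' x)) +
        (Real.log (g y x) - Real.log (g y' x)) := fun x => by
      rw [← Real.log_sub_log_of_eq_mul_mul (hPfgh x y hy) (hPfgh x y' hy') (hP0 x y) (hP0 x y'),
        hP, hP, log_exp_div_sum_exp (fun y => ⟪u x, v y⟫) y,
        log_exp_div_sum_exp (fun y => ⟪u x, v y⟫) y', inner_sub_right]
      ring
    exact Submodule.mem_sup.2 ⟨_, fun x x' hx => by rw [hf y x x' hx, hf y' x x' hx],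
      _, fun x x' hx => by rw [hg y x x' hx, hg y' x x' hx], (funext hlog).symm⟩
  obtain ⟨a, ha, b, hb, rfl⟩ := Submodule.mem_sup.1 hsep
  refine ⟨fun H ⟨i, hi⟩ ⟨j, hj⟩ => ?_, fun y x => Real.exp ⟪a x, v y⟫,
    fun y x => Real.exp ⟪b x, v y⟫, fun x => (∑ y', Real.exp ⟪a x + b x, v y'⟫)⁻¹,
    fun y _ _ hx => congrArg (fun z => Real.exp ⟪z, v y⟫) (ha hx),
    fun y _ _ hx => congrArg (fun z => Real.exp ⟪z, v y⟫) (hb hx),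
    fun x y => by rw [hP, Pi.add_apply, inner_add_left, Real.exp_add, div_eq_mul_inv]⟩
  rw [Finset.mem_inter] at hi hj
  have hjIK : j ∉ (↑(I ∪ K) : Set (Fin m)) := by
    simp [disjoint_right.1 hIJ hj.2, disjoint_left.1 hJK hj.2]
  have hiJK : i ∉ (↑(J ∪ K) : Set (Fin m)) := by
    simp [disjoint_left.1 hIJ hi.2, disjoint_left.1 hIK hi.2]
  rw [Qop_add, Qop_eq_zero_of_dependsOn hj.1 hjIK ha, Qop_eq_zero_of_dependsOn hi.1 hiJK hb,
    add_zero]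

/-- if relative causal independence holds on a subset `Y₀` of outputs whose
embedding differences span `V`, then `u_H = 0` for every `H` meeting both `I` and `J`,
and consequently the factorization holds for all `x ∈ X` and all `y ∈ Y`. -/
theorem uH_eq_zero_of_span {m : ℕ}
    (X : Fin m → Type*) [∀ i, Fintype (X i)] [∀ i, Nonempty (X i)] [∀ i, DecidableEq (X i)]
    (Y : Type*) [Fintype Y] [Nonempty Y]
    (V : Type*) [NormedAddCommGroup V] [InnerProductSpace ℝ V] [FiniteDimensional ℝ V]
    (u : (∀ i, X i) → V) (v : Y → V)
    (P : (∀ i, X i) → Y → ℝ)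
    (hP : ∀ x y, P x y = Real.exp ⟪u x, v y⟫ / ∑ y' : Y, Real.exp ⟪u x, v y'⟫)
    (I J K : Finset (Fin m))
    (hIJ : Disjoint I J) (hIK : Disjoint I K) (hJK : Disjoint J K)
    (hIJK : I ∪ J ∪ K = Finset.univ)
    (Y₀ : Set Y)
    (hspan : Submodule.span ℝ {d : V | ∃ y ∈ Y₀, ∃ y' ∈ Y₀, d = v y - v y'} = ⊤)
    (hfact : ∃ (f g : Y → (∀ i, X i) → ℝ) (h : (∀ i, X i) → ℝ),
      (∀ (y : Y) (x x' : ∀ i, X i), (∀ i ∈ I ∪ K, x i = x' i) → f y x = f y x') ∧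
      (∀ (y : Y) (x x' : ∀ i, X i), (∀ i ∈ J ∪ K, x i = x' i) → g y x = g y x') ∧
      (∀ (x : ∀ i, X i), ∀ y ∈ Y₀, P x y = f y x * g y x * h x)) :
    (∀ H : Finset (Fin m), (H ∩ I).Nonempty → (H ∩ J).Nonempty → Qop H u = 0) ∧
    (∃ (f g : Y → (∀ i, X i) → ℝ) (h : (∀ i, X i) → ℝ),
      (∀ (y : Y) (x x' : ∀ i, X i), (∀ i ∈ I ∪ K, x i = x' i) → f y x = f y x') ∧
      (∀ (y : Y) (x x' : ∀ i, X i), (∀ i ∈ J ∪ K, x i = x' i) → g y x = g y x') ∧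
      (∀ (x : ∀ i, X i) (y : Y), P x y = f y x * g y x * h x)) :=
  uH_eq_zero_of_span_general X Y V u v P hP I J K hIJ hIK hJK Y₀ hspan hfact
end
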